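/- Let x₁,…,x₇, y₁,…,y₇ ∈ ℝ³ be nonzero vectors, and let F₁, F₂ be real 3×3 matrices that form a basis of the linear space L = {F ∈ ℝ^{3×3} : yᵢᵀ·F·xᵢ = 0 for all i = 1,…,7}. Then: (1) if a, b ∈ ℝ³ are nonzero and there exists a nonzero real 3×3 matrix F with yᵢᵀ·F·xᵢ = 0 for all i = 1,…,7, F·a = 0, and Fᵀ·b = 0, then (F₁·a) × (F₂·a) = 0 and (F₁ᵀ·b) × (F₂ᵀ·b) = 0; (2) if a ∈ ℝ³ is nonzero and F₁·a and F₂·a are not both zero, then any two nonzero matrices F, F′ ∈ span{F₁, F₂} with F·a = 0 and F′·a = 0 are proportional (F′ = λ·F for some nonzero real λ). -/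

import Mathlib

/-!
Every matrix in the span of `F₁, F₂` is `c • F₁ + d • F₂`. If such a nonzero `F` kills `a`, then
`c • F₁ a + d • F₂ a = 0` with `(c, d) ≠ 0`, so `F₁ a, F₂ a` are dependent and their cross
product vanishes (likewise for `Fᵀ b`). If `F ↦ F a` is nonzero on the pencil, which is at most
two-dimensional, its kernel there is at most a line, so two nonzero matrices of the pencil
killing `a` are proportional.
-/

open Matrix

def cross3 (u v : Fin 3 → ℝ) : Fin 3 → ℝ :=
  ![u 1 * v 2 - u 2 * v 1, u 2 * v 0 - u 0 * v 2, u 0 * v 1 - u 1 * v 0]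

open Module Submodule

section PencilKernel

variable {R K V M : Type*}

theorem not_linearIndependent_map_pair_of_mem_span_pair [Ring R] [AddCommGroup V] [Module R V]
    [AddCommGroup M] [Module R M] (f : V →ₗ[R] M) {v₁ v₂ w : V}
    (hw : w ∈ span R {v₁, v₂}) (hw0 : w ≠ 0) (hfw : f w = 0) :
    ¬LinearIndependent R ![f v₁, f v₂] := by
  obtain ⟨c, d, rfl⟩ := mem_span_pair.mp hw
  intro hind
  obtain ⟨rfl, rfl⟩ := LinearIndependent.pair_iff.mp hind c d (by simpa using hfw)
  simp at hw0

variable [Field K] [AddCommGroup V] [Module K V] [AddCommGroup M] [Module K M]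

instance finiteDimensional_span_pair (v₁ v₂ : V) : FiniteDimensional K (span K {v₁, v₂}) :=
  FiniteDimensional.span_of_finite K (Set.toFinite _)

theorem finrank_span_pair_le_two (v₁ v₂ : V) : finrank K (span K {v₁, v₂}) ≤ 2 := by
  classical
  rw [← Finset.coe_pair]
  exact (finrank_span_finset_le_card _).trans Finset.card_le_two

theorem finrank_span_pair_inf_ker_le_one (f : V →ₗ[K] M) {v₁ v₂ : V}
    (hf : f v₁ ≠ 0 ∨ f v₂ ≠ 0) : finrank K ↥(span K {v₁, v₂} ⊓ LinearMap.ker f) ≤ 1 := by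
  have hlt : span K {v₁, v₂} ⊓ LinearMap.ker f < span K {v₁, v₂} := by
    refine inf_lt_left.mpr fun hle => ?_
    rcases hf with hf | hf <;> exact hf (hle (subset_span (by simp)))
  have := finrank_span_pair_le_two (K := K) v₁ v₂
  have := finrank_lt_finrank_of_lt hlt
  omega

theorem exists_smul_eq_of_mem_span_pair_of_map_eq_zero (f : V →ₗ[K] M) {v₁ v₂ w w' : V}
    (hf : f v₁ ≠ 0 ∨ f v₂ ≠ 0) (hw : w ∈ span K {v₁, v₂}) (hw' : w' ∈ span K {v₁, v₂})
    (hw0 : w ≠ 0) (hfw : f w = 0) (hfw' : f w' = 0) : ∃ c : K, c • w = w' := by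
  have hrank : finrank K ↥(span K {v₁, v₂} ⊓ LinearMap.ker f) = 1 :=
    le_antisymm (finrank_span_pair_inf_ker_le_one f hf) <|
      one_le_finrank_iff.mpr <| (Submodule.ne_bot_iff _).mpr ⟨w, ⟨hw, hfw⟩, hw0⟩
  exact mem_span_singleton.mp <|
    eq_span_singleton_of_mem_of_finrank_eq_one hrank ⟨hw, hfw⟩ hw0 ▸ ⟨hw', hfw'⟩

end PencilKernel

theorem cross3_eq_zero_iff_not_linearIndependent {u v : Fin 3 → ℝ} :
    cross3 u v = 0 ↔ ¬LinearIndependent ℝ ![u, v] := by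
  rw [← crossProduct_ne_zero_iff_linearIndependent, not_not, cross_apply]
  rfl

theorem seven_points_three_conics_and_uniqueness_general
    (x y : Fin 7 → Fin 3 → ℝ)
    (F₁ F₂ : Matrix (Fin 3) (Fin 3) ℝ)
    (hspan : ∀ F : Matrix (Fin 3) (Fin 3) ℝ,
      (∀ i, y i ⬝ᵥ F.mulVec (x i) = 0) → F ∈ Submodule.span ℝ {F₁, F₂}) :
    (∀ a b : Fin 3 → ℝ, a ≠ 0 → b ≠ 0 →
      (∃ F : Matrix (Fin 3) (Fin 3) ℝ, F ≠ 0 ∧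
        (∀ i, y i ⬝ᵥ F.mulVec (x i) = 0) ∧ F.mulVec a = 0 ∧ Fᵀ.mulVec b = 0) →
      cross3 (F₁.mulVec a) (F₂.mulVec a) = 0 ∧
      cross3 (F₁ᵀ.mulVec b) (F₂ᵀ.mulVec b) = 0) ∧
    (∀ a : Fin 3 → ℝ, a ≠ 0 → ¬(F₁.mulVec a = 0 ∧ F₂.mulVec a = 0) →
      ∀ F F' : Matrix (Fin 3) (Fin 3) ℝ, F ≠ 0 → F' ≠ 0 →
        F ∈ Submodule.span ℝ {F₁, F₂} → F' ∈ Submodule.span ℝ {F₁, F₂} →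
        F.mulVec a = 0 → F'.mulVec a = 0 →
        ∃ lam : ℝ, lam ≠ 0 ∧ F' = lam • F) := by
  let mulVecAt (a : Fin 3 → ℝ) : Matrix (Fin 3) (Fin 3) ℝ →ₗ[ℝ] Fin 3 → ℝ :=
    (mulVecBilin ℝ ℝ).flip a
  let transposeMulVecAt (b : Fin 3 → ℝ) : Matrix (Fin 3) (Fin 3) ℝ →ₗ[ℝ] Fin 3 → ℝ :=
    mulVecAt b ∘ₗ (transposeLinearEquiv (Fin 3) (Fin 3) ℝ ℝ).toLinearMap
  refine ⟨fun a b _ _ ⟨F, hF0, hFxy, hFa, hFb⟩ => ⟨?_, ?_⟩, ?_⟩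
  · exact cross3_eq_zero_iff_not_linearIndependent.mpr <|
      not_linearIndependent_map_pair_of_mem_span_pair (mulVecAt a) (hspan F hFxy) hF0 hFa
  · exact cross3_eq_zero_iff_not_linearIndependent.mpr <|
      not_linearIndependent_map_pair_of_mem_span_pair (transposeMulVecAt b) (hspan F hFxy) hF0 hFb
  · intro a _ hnz F F' hF0 hF'0 hF hF' hFa hF'a
    obtain ⟨c, rfl⟩ := exists_smul_eq_of_mem_span_pair_of_map_eq_zero (mulVecAt a)
      (not_and_or.mp hnz) hF hF' hF0 hFa hF'a
    exact ⟨c, by rintro rfl; simp at hF'0, rfl⟩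

/-- Concrete form of Theorem 32 (n = 7): each camera center lies on the common
zero locus of three conics given by the vanishing cross products, where
`F₁, F₂` is a basis of the pencil of matrices satisfying the seven incidence
constraints; and once one center is fixed, the fundamental matrix in the
pencil is uniquely determined up to scale. -/
theorem seven_points_three_conics_and_uniqueness
    (x y : Fin 7 → Fin 3 → ℝ)
    (hx : ∀ i, x i ≠ 0) (hy : ∀ i, y i ≠ 0)
    (F₁ F₂ : Matrix (Fin 3) (Fin 3) ℝ)
    (hmem : ∀ i, y i ⬝ᵥ F₁.mulVec (x i) = 0 ∧ y i ⬝ᵥ F₂.mulVec (x i) = 0)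
    (hind : LinearIndependent ℝ ![F₁, F₂])
    (hspan : ∀ F : Matrix (Fin 3) (Fin 3) ℝ,
      (∀ i, y i ⬝ᵥ F.mulVec (x i) = 0) → F ∈ Submodule.span ℝ {F₁, F₂}) :
    (∀ a b : Fin 3 → ℝ, a ≠ 0 → b ≠ 0 →
      (∃ F : Matrix (Fin 3) (Fin 3) ℝ, F ≠ 0 ∧
        (∀ i, y i ⬝ᵥ F.mulVec (x i) = 0) ∧ F.mulVec a = 0 ∧ Fᵀ.mulVec b = 0) →
      cross3 (F₁.mulVec a) (F₂.mulVec a) = 0 ∧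
      cross3 (F₁ᵀ.mulVec b) (F₂ᵀ.mulVec b) = 0) ∧
    (∀ a : Fin 3 → ℝ, a ≠ 0 → ¬(F₁.mulVec a = 0 ∧ F₂.mulVec a = 0) →
      ∀ F F' : Matrix (Fin 3) (Fin 3) ℝ, F ≠ 0 → F' ≠ 0 →
        F ∈ Submodule.span ℝ {F₁, F₂} → F' ∈ Submodule.span ℝ {F₁, F₂} →
        F.mulVec a = 0 → F'.mulVec a = 0 →
        ∃ lam : ℝ, lam ≠ 0 ∧ F' = lam • F) :=
  seven_points_three_conics_and_uniqueness_general x y F₁ F₂ hspan
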